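/- η-law for CBPV thunks (one half): for every closed CBPV value v of type Uκ, v ≲ctx thunk(force(v)). -/

import Mathlib

namespace CBPV

mutual
/-- Value types (with `n` free type variables). -/
inductive VTy : ℕ → Type
  | U {n} (κ : CTy n) : VTy n
  | unit {n} : VTy n
  | sum {n} (φ₁ φ₂ : VTy n) : VTy n
  | prod {n} (φ₁ φ₂ : VTy n) : VTy n
/-- Computation types (with `n` free type variables). -/
inductive CTy : ℕ → Type
  | var {n} (i : Fin n) : CTy n
  | F {n} (φ : VTy n) : CTy n
  | arr {n} (φ : VTy n) (κ : CTy n) : CTy n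
  | tensor {n} (κ₁ κ₂ : CTy n) : CTy n
  | mu {n} (κ : CTy (n+1)) : CTy n
end

/-- Lifting of a renaming of type variables under a binder. -/
def liftTR {n m : ℕ} (r : Fin n → Fin m) : Fin (n+1) → Fin (m+1) :=
  Fin.cases 0 (fun j => (r j).succ)

mutual
/-- Renaming of type variables in value types. -/
def VTy.rename : ∀ {n m : ℕ}, (Fin n → Fin m) → VTy n → VTy m
  | _, _, r, .U κ => .U (CTy.rename r κ)
  | _, _, _, .unit => .unit
  | _, _, r, .sum φ₁ φ₂ => .sum (VTy.rename r φ₁) (VTy.rename r φ₂)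
  | _, _, r, .prod φ₁ φ₂ => .prod (VTy.rename r φ₁) (VTy.rename r φ₂)
/-- Renaming of type variables in computation types. -/
def CTy.rename : ∀ {n m : ℕ}, (Fin n → Fin m) → CTy n → CTy m
  | _, _, r, .var i => .var (r i)
  | _, _, r, .F φ => .F (VTy.rename r φ)
  | _, _, r, .arr φ κ => .arr (VTy.rename r φ) (CTy.rename r κ)
  | _, _, r, .tensor κ₁ κ₂ => .tensor (CTy.rename r κ₁) (CTy.rename r κ₂)
  | _, _, r, .mu κ => .mu (CTy.rename (liftTR r) κ)
end

/-- Lifting of a type substitution under a binder. -/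
def liftTS {n m : ℕ} (σ : Fin n → CTy m) : Fin (n+1) → CTy (m+1) :=
  Fin.cases (.var 0) (fun j => (σ j).rename Fin.succ)

mutual
/-- Substitution of type variables in value types. -/
def VTy.subst : ∀ {n m : ℕ}, (Fin n → CTy m) → VTy n → VTy m
  | _, _, σ, .U κ => .U (CTy.subst σ κ)
  | _, _, _, .unit => .unit
  | _, _, σ, .sum φ₁ φ₂ => .sum (VTy.subst σ φ₁) (VTy.subst σ φ₂)
  | _, _, σ, .prod φ₁ φ₂ => .prod (VTy.subst σ φ₁) (VTy.subst σ φ₂)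
/-- Substitution of type variables in computation types. -/
def CTy.subst : ∀ {n m : ℕ}, (Fin n → CTy m) → CTy n → CTy m
  | _, _, σ, .var i => σ i
  | _, _, σ, .F φ => .F (VTy.subst σ φ)
  | _, _, σ, .arr φ κ => .arr (VTy.subst σ φ) (CTy.subst σ κ)
  | _, _, σ, .tensor κ₁ κ₂ => .tensor (CTy.subst σ κ₁) (CTy.subst σ κ₂)
  | _, _, σ, .mu κ => .mu (CTy.subst (liftTS σ) κ)
end

/-- `κ[μα.κ/α]` for `κ` with one free type variable. -/
def substMu (κ : CTy 1) : CTy 0 := CTy.subst (fun _ => .mu κ) κ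

abbrev VTy0 := VTy 0
abbrev CTy0 := CTy 0

/-- Typing contexts: lists of closed value types. -/
abbrev Cx := List VTy0

/-- Typed de Bruijn variables. -/
inductive Var : Cx → VTy0 → Type
  | vz {Γ φ} : Var (φ :: Γ) φ
  | vs {Γ φ ψ} : Var Γ φ → Var (ψ :: Γ) φ

mutual
/-- Intrinsically typed values of CBPV. -/
inductive Val : Cx → VTy0 → Type
  | var {Γ φ} : Var Γ φ → Val Γ φ
  | star {Γ} : Val Γ .unit
  | inl {Γ φ₁ φ₂} : Val Γ φ₁ → Val Γ (.sum φ₁ φ₂)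
  | inr {Γ φ₁ φ₂} : Val Γ φ₂ → Val Γ (.sum φ₁ φ₂)
  | pair {Γ φ₁ φ₂} : Val Γ φ₁ → Val Γ φ₂ → Val Γ (.prod φ₁ φ₂)
  | thunk {Γ κ} : Comp Γ κ → Val Γ (.U κ)
/-- Intrinsically typed computations of CBPV. -/
inductive Comp : Cx → CTy0 → Type
  | ret {Γ φ} : Val Γ φ → Comp Γ (.F φ)                 -- prod(v)
  | force {Γ κ} : Val Γ (.U κ) → Comp Γ κ
  | app {Γ φ κ} : Comp Γ (.arr φ κ) → Val Γ φ → Comp Γ κ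
  | lam {Γ φ κ} : Comp (φ :: Γ) κ → Comp Γ (.arr φ κ)
  | fold {Γ} {κ : CTy 1} : Comp Γ (substMu κ) → Comp Γ (.mu κ)
  | unfold {Γ} {κ : CTy 1} : Comp Γ (.mu κ) → Comp Γ (substMu κ)
  | choice {Γ κ} : Comp Γ κ → Comp Γ κ → Comp Γ κ       -- t ⊕ s
  | seq {Γ φ κ} : Comp Γ (.F φ) → Comp (φ :: Γ) κ → Comp Γ κ  -- s to x in t
  | case {Γ φ₁ φ₂ κ} : Val Γ (.sum φ₁ φ₂) →
      Comp (φ₁ :: Γ) κ → Comp (φ₂ :: Γ) κ → Comp Γ κ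
  | fst {Γ κ₁ κ₂} : Comp Γ (.tensor κ₁ κ₂) → Comp Γ κ₁
  | snd {Γ κ₁ κ₂} : Comp Γ (.tensor κ₁ κ₂) → Comp Γ κ₂
  | pair {Γ κ₁ κ₂} : Comp Γ κ₁ → Comp Γ κ₂ → Comp Γ (.tensor κ₁ κ₂)
  | pm {Γ φ₁ φ₂ κ} : Val Γ (.prod φ₁ φ₂) → Comp (φ₁ :: φ₂ :: Γ) κ → Comp Γ κ
end

/-- Renamings of term variables. -/
def Ren (Γ Δ : Cx) : Type := ∀ φ, Var Γ φ → Var Δ φ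

/-- Lifting a renaming under a binder. -/
def Ren.lift {Γ Δ : Cx} {φ : VTy0} (r : Ren Γ Δ) : Ren (φ :: Γ) (φ :: Δ) := fun ψ x =>
  match x with
  | .vz => .vz
  | .vs y => .vs (r ψ y)

mutual
/-- Renaming of free variables in values. -/
def renameV : ∀ {Γ Δ : Cx} {φ : VTy0}, Ren Γ Δ → Val Γ φ → Val Δ φ
  | _, _, _, r, .var x => .var (r _ x)
  | _, _, _, _, .star => .star
  | _, _, _, r, .inl v => .inl (renameV r v)
  | _, _, _, r, .inr v => .inr (renameV r v)
  | _, _, _, r, .pair v w => .pair (renameV r v) (renameV r w)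
  | _, _, _, r, .thunk t => .thunk (renameC r t)
/-- Renaming of free variables in computations. -/
def renameC : ∀ {Γ Δ : Cx} {κ : CTy0}, Ren Γ Δ → Comp Γ κ → Comp Δ κ
  | _, _, _, r, .ret v => .ret (renameV r v)
  | _, _, _, r, .force v => .force (renameV r v)
  | _, _, _, r, .app t v => .app (renameC r t) (renameV r v)
  | _, _, _, r, .lam t => .lam (renameC r.lift t)
  | _, _, _, r, .fold t => .fold (renameC r t)
  | _, _, _, r, .unfold t => .unfold (renameC r t)
  | _, _, _, r, .choice t s => .choice (renameC r t) (renameC r s)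
  | _, _, _, r, .seq s t => .seq (renameC r s) (renameC r.lift t)
  | _, _, _, r, .case v s t => .case (renameV r v) (renameC r.lift s) (renameC r.lift t)
  | _, _, _, r, .fst t => .fst (renameC r t)
  | _, _, _, r, .snd t => .snd (renameC r t)
  | _, _, _, r, .pair t s => .pair (renameC r t) (renameC r s)
  | _, _, _, r, .pm v t => .pm (renameV r v) (renameC r.lift.lift t)
end

/-- Substitutions: maps from variables to values. -/
def Sub (Γ Δ : Cx) : Type := ∀ φ, Var Γ φ → Val Δ φ

/-- Lifting a substitution under a binder. -/
def Sub.lift {Γ Δ : Cx} {φ : VTy0} (σ : Sub Γ Δ) : Sub (φ :: Γ) (φ :: Δ) := fun ψ x =>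
  match x with
  | .vz => .var .vz
  | .vs y => renameV (fun _ z => .vs z) (σ ψ y)

mutual
/-- Simultaneous substitution in values. -/
def substV : ∀ {Γ Δ : Cx} {φ : VTy0}, Sub Γ Δ → Val Γ φ → Val Δ φ
  | _, _, _, σ, .var x => σ _ x
  | _, _, _, _, .star => .star
  | _, _, _, σ, .inl v => .inl (substV σ v)
  | _, _, _, σ, .inr v => .inr (substV σ v)
  | _, _, _, σ, .pair v w => .pair (substV σ v) (substV σ w)
  | _, _, _, σ, .thunk t => .thunk (substC σ t)
/-- Simultaneous substitution in computations. -/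
def substC : ∀ {Γ Δ : Cx} {κ : CTy0}, Sub Γ Δ → Comp Γ κ → Comp Δ κ
  | _, _, _, σ, .ret v => .ret (substV σ v)
  | _, _, _, σ, .force v => .force (substV σ v)
  | _, _, _, σ, .app t v => .app (substC σ t) (substV σ v)
  | _, _, _, σ, .lam t => .lam (substC σ.lift t)
  | _, _, _, σ, .fold t => .fold (substC σ t)
  | _, _, _, σ, .unfold t => .unfold (substC σ t)
  | _, _, _, σ, .choice t s => .choice (substC σ t) (substC σ s)
  | _, _, _, σ, .seq s t => .seq (substC σ s) (substC σ.lift t)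
  | _, _, _, σ, .case v s t => .case (substV σ v) (substC σ.lift s) (substC σ.lift t)
  | _, _, _, σ, .fst t => .fst (substC σ t)
  | _, _, _, σ, .snd t => .snd (substC σ t)
  | _, _, _, σ, .pair t s => .pair (substC σ t) (substC σ s)
  | _, _, _, σ, .pm v t => .pm (substV σ v) (substC σ.lift.lift t)
end

/-- The substitution replacing the last-bound variable by `v`. -/
def sub1 {Γ : Cx} {φ : VTy0} (v : Val Γ φ) : Sub (φ :: Γ) Γ := fun ψ x =>
  match x with
  | .vz => v
  | .vs y => .var y

/-- Single substitution `t[v/x]`. -/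
def subst1 {Γ : Cx} {φ : VTy0} {κ : CTy0} (t : Comp (φ :: Γ) κ) (v : Val Γ φ) : Comp Γ κ :=
  substC (sub1 v) t

/-- Weakening of a value. -/
def wkV {Γ : Cx} {φ ψ : VTy0} (v : Val Γ φ) : Val (ψ :: Γ) φ :=
  renameV (fun _ x => .vs x) v

/-- The small-step reduction relation `t → t'` on computations. -/
inductive CStep : ∀ {Γ : Cx} {κ : CTy0}, Comp Γ κ → Comp Γ κ → Prop
  | fold_unfold {Γ} {κ : CTy 1} (t : Comp Γ (.mu κ)) :
      CStep (.fold (.unfold t)) t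
  | app_cong {Γ φ κ} {t t' : Comp Γ (.arr φ κ)} (v : Val Γ φ) :
      CStep t t' → CStep (.app t v) (.app t' v)
  | app_beta {Γ φ κ} (M : Comp (φ :: Γ) κ) (v : Val Γ φ) :
      CStep (.app (.lam M) v) (subst1 M v)
  | fst_cong {Γ κ₁ κ₂} {t t' : Comp Γ (.tensor κ₁ κ₂)} :
      CStep t t' → CStep (.fst t) (.fst t')
  | snd_cong {Γ κ₁ κ₂} {t t' : Comp Γ (.tensor κ₁ κ₂)} :
      CStep t t' → CStep (.snd t) (.snd t')
  | fst_pair {Γ κ₁ κ₂} (t : Comp Γ κ₁) (s : Comp Γ κ₂) :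
      CStep (.fst (.pair t s)) t
  | snd_pair {Γ κ₁ κ₂} (t : Comp Γ κ₁) (s : Comp Γ κ₂) :
      CStep (.snd (.pair t s)) s
  | choice_l {Γ κ} (t s : Comp Γ κ) : CStep (.choice t s) t
  | choice_r {Γ κ} (t s : Comp Γ κ) : CStep (.choice t s) s
  | seq_cong {Γ φ κ} {s s' : Comp Γ (.F φ)} (t : Comp (φ :: Γ) κ) :
      CStep s s' → CStep (.seq s t) (.seq s' t)
  | seq_ret {Γ φ κ} {s : Comp Γ (.F φ)} {v : Val Γ φ} (t : Comp (φ :: Γ) κ) :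
      CStep s (.ret v) → CStep (.seq s t) (.app (.lam t) v)
  | case_inl {Γ φ₁ φ₂ κ} (v : Val Γ φ₁) (s : Comp (φ₁ :: Γ) κ) (r : Comp (φ₂ :: Γ) κ) :
      CStep (.case (.inl v) s r) (.app (.lam s) v)
  | case_inr {Γ φ₁ φ₂ κ} (v : Val Γ φ₂) (s : Comp (φ₁ :: Γ) κ) (r : Comp (φ₂ :: Γ) κ) :
      CStep (.case (.inr v) s r) (.app (.lam r) v)
  | force_thunk {Γ κ} (t : Comp Γ κ) : CStep (.force (.thunk t)) t
  | pm_pair {Γ φ₁ φ₂ κ} (v : Val Γ φ₁) (w : Val Γ φ₂) (t : Comp (φ₁ :: φ₂ :: Γ) κ) :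
      CStep (.pm (.pair v w) t) (.app (.lam (.app (.lam t) (wkV v))) w)

/-- `t ⇒ t'`: reflexive-transitive closure of `→`. -/
def CSteps {Γ : Cx} {κ : CTy0} : Comp Γ κ → Comp Γ κ → Prop :=
  Relation.ReflTransGen CStep

/-- `t⇓` (may-termination): `t` reduces to a term admitting no step. -/
def Conv {Γ : Cx} {κ : CTy0} (t : Comp Γ κ) : Prop :=
  ∃ t', CSteps t t' ∧ ∀ t'', ¬ CStep t' t''

/-- Sorted relations on values. -/
abbrev VRel : Type := ∀ (Γ : Cx) (φ : VTy0), Val Γ φ → Val Γ φ → Prop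

/-- Sorted relations on computations. -/
abbrev CRel : Type := ∀ (Γ : Cx) (κ : CTy0), Comp Γ κ → Comp Γ κ → Prop

/-- Compatibility with renamings of free variables. -/
def RenCompat (RV : VRel) (RC : CRel) : Prop :=
  (∀ (Γ Δ : Cx) (r : Ren Γ Δ) (φ : VTy0) (v w : Val Γ φ),
      RV Γ φ v w → RV Δ φ (renameV r v) (renameV r w)) ∧
  (∀ (Γ Δ : Cx) (r : Ren Γ Δ) (κ : CTy0) (t s : Comp Γ κ),
      RC Γ κ t s → RC Δ κ (renameC r t) (renameC r s))

/-- Congruences: renaming-compatible relations compatible with all term formers of CBPV. -/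
structure IsCong (RV : VRel) (RC : CRel) : Prop where
  rencompat : RenCompat RV RC
  var : ∀ Γ φ (x : Var Γ φ), RV Γ φ (.var x) (.var x)
  star : ∀ Γ, RV Γ .unit .star .star
  inl : ∀ Γ φ₁ φ₂ (v w : Val Γ φ₁),
    RV Γ φ₁ v w → RV Γ (.sum φ₁ φ₂) (.inl v) (.inl w)
  inr : ∀ Γ φ₁ φ₂ (v w : Val Γ φ₂),
    RV Γ φ₂ v w → RV Γ (.sum φ₁ φ₂) (.inr v) (.inr w)
  pairV : ∀ Γ φ₁ φ₂ (v₁ w₁ : Val Γ φ₁) (v₂ w₂ : Val Γ φ₂),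
    RV Γ φ₁ v₁ w₁ → RV Γ φ₂ v₂ w₂ →
    RV Γ (.prod φ₁ φ₂) (.pair v₁ v₂) (.pair w₁ w₂)
  thunk : ∀ Γ κ (t s : Comp Γ κ),
    RC Γ κ t s → RV Γ (.U κ) (.thunk t) (.thunk s)
  ret : ∀ Γ φ (v w : Val Γ φ),
    RV Γ φ v w → RC Γ (.F φ) (.ret v) (.ret w)
  force : ∀ Γ κ (v w : Val Γ (.U κ)),
    RV Γ (.U κ) v w → RC Γ κ (.force v) (.force w)
  app : ∀ Γ φ κ (t s : Comp Γ (.arr φ κ)) (v w : Val Γ φ),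
    RC Γ (.arr φ κ) t s → RV Γ φ v w → RC Γ κ (.app t v) (.app s w)
  lam : ∀ Γ φ κ (M N : Comp (φ :: Γ) κ),
    RC (φ :: Γ) κ M N → RC Γ (.arr φ κ) (.lam M) (.lam N)
  fold : ∀ Γ (κ : CTy 1) (t s : Comp Γ (substMu κ)),
    RC Γ (substMu κ) t s → RC Γ (.mu κ) (.fold t) (.fold s)
  unfold : ∀ Γ (κ : CTy 1) (t s : Comp Γ (.mu κ)),
    RC Γ (.mu κ) t s → RC Γ (substMu κ) (.unfold t) (.unfold s)
  choice : ∀ Γ κ (t s t' s' : Comp Γ κ),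
    RC Γ κ t s → RC Γ κ t' s' → RC Γ κ (.choice t t') (.choice s s')
  seq : ∀ Γ φ κ (s s' : Comp Γ (.F φ)) (t t' : Comp (φ :: Γ) κ),
    RC Γ (.F φ) s s' → RC (φ :: Γ) κ t t' → RC Γ κ (.seq s t) (.seq s' t')
  case : ∀ Γ φ₁ φ₂ κ (v w : Val Γ (.sum φ₁ φ₂))
      (s s' : Comp (φ₁ :: Γ) κ) (r r' : Comp (φ₂ :: Γ) κ),
    RV Γ (.sum φ₁ φ₂) v w → RC (φ₁ :: Γ) κ s s' → RC (φ₂ :: Γ) κ r r' →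
    RC Γ κ (.case v s r) (.case w s' r')
  fst : ∀ Γ κ₁ κ₂ (t s : Comp Γ (.tensor κ₁ κ₂)),
    RC Γ (.tensor κ₁ κ₂) t s → RC Γ κ₁ (.fst t) (.fst s)
  snd : ∀ Γ κ₁ κ₂ (t s : Comp Γ (.tensor κ₁ κ₂)),
    RC Γ (.tensor κ₁ κ₂) t s → RC Γ κ₂ (.snd t) (.snd s)
  pairC : ∀ Γ κ₁ κ₂ (t₁ s₁ : Comp Γ κ₁) (t₂ s₂ : Comp Γ κ₂),
    RC Γ κ₁ t₁ s₁ → RC Γ κ₂ t₂ s₂ →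
    RC Γ (.tensor κ₁ κ₂) (.pair t₁ t₂) (.pair s₁ s₂)
  pm : ∀ Γ φ₁ φ₂ κ (v w : Val Γ (.prod φ₁ φ₂)) (t s : Comp (φ₁ :: φ₂ :: Γ) κ),
    RV Γ (.prod φ₁ φ₂) v w → RC (φ₁ :: φ₂ :: Γ) κ t s →
    RC Γ κ (.pm v t) (.pm w s)

/-- Containment in the preorder `O` (whose value component is total). -/
def SubO (RC : CRel) : Prop :=
  ∀ Γ κ (t s : Comp Γ κ), RC Γ κ t s → Conv t → Conv s

/-- The contextual preorder on values: the greatest congruence contained in `O`. -/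
def CtxLeV (Γ : Cx) (φ : VTy0) (v w : Val Γ φ) : Prop :=
  ∃ RV RC, IsCong RV RC ∧ SubO RC ∧ RV Γ φ v w

/-- The contextual preorder on computations: the greatest congruence contained in `O`. -/
def CtxLeC (Γ : Cx) (κ : CTy0) (t s : Comp Γ κ) : Prop :=
  ∃ RV RC, IsCong RV RC ∧ SubO RC ∧ RC Γ κ t s

/-- Applicative (weak) simulations for CBPV. -/
structure IsSim (RV : VRel) (RC : CRel) : Prop where
  substV : ∀ (Γ Δ : Cx) (σ : Sub Γ Δ) (φ : VTy0) (v w : Val Γ φ),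
    RV Γ φ v w → RV Δ φ (substV σ v) (substV σ w)
  substC : ∀ (Γ Δ : Cx) (σ : Sub Γ Δ) (κ : CTy0) (t s : Comp Γ κ),
    RC Γ κ t s → RC Δ κ (substC σ t) (substC σ s)
  step : ∀ Γ κ (t s : Comp Γ κ), RC Γ κ t s →
    ∀ t', CStep t t' → ∃ s', CSteps s s' ∧ RC Γ κ t' s'
  star : ∀ Γ (s : Val Γ .unit), RV Γ .unit .star s → s = .star
  thunk : ∀ Γ κ (t' : Comp Γ κ) (s : Val Γ (.U κ)),
    RV Γ (.U κ) (.thunk t') s → ∃ s', s = .thunk s' ∧ RC Γ κ t' s'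
  inl : ∀ Γ φ₁ φ₂ (v : Val Γ φ₁) (s : Val Γ (.sum φ₁ φ₂)),
    RV Γ (.sum φ₁ φ₂) (.inl v) s → ∃ w, s = .inl w ∧ RV Γ φ₁ v w
  inr : ∀ Γ φ₁ φ₂ (v : Val Γ φ₂) (s : Val Γ (.sum φ₁ φ₂)),
    RV Γ (.sum φ₁ φ₂) (.inr v) s → ∃ w, s = .inr w ∧ RV Γ φ₂ v w
  pairV : ∀ Γ φ₁ φ₂ (v₁ : Val Γ φ₁) (v₂ : Val Γ φ₂) (s : Val Γ (.prod φ₁ φ₂)),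
    RV Γ (.prod φ₁ φ₂) (.pair v₁ v₂) s →
    ∃ w₁ w₂, s = .pair w₁ w₂ ∧ RV Γ φ₁ v₁ w₁ ∧ RV Γ φ₂ v₂ w₂
  pairC : ∀ Γ κ₁ κ₂ (t₁ : Comp Γ κ₁) (t₂ : Comp Γ κ₂) (s : Comp Γ (.tensor κ₁ κ₂)),
    RC Γ (.tensor κ₁ κ₂) (.pair t₁ t₂) s →
    ∃ s₁ s₂, CSteps s (.pair s₁ s₂) ∧ RC Γ κ₁ t₁ s₁ ∧ RC Γ κ₂ t₂ s₂
  fold : ∀ Γ (κ : CTy 1) (t' : Comp Γ (substMu κ)) (s : Comp Γ (.mu κ)),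
    RC Γ (.mu κ) (.fold t') s →
    ∃ s', CSteps s (.fold s') ∧ RC Γ (substMu κ) t' s'
  lam : ∀ Γ φ κ (M : Comp (φ :: Γ) κ) (s : Comp Γ (.arr φ κ)),
    RC Γ (.arr φ κ) (.lam M) s →
    ∃ N, CSteps s (.lam N) ∧ ∀ v : Val Γ φ, RC Γ κ (subst1 M v) (subst1 N v)
  ret : ∀ Γ φ (v : Val Γ φ) (s : Comp Γ (.F φ)),
    RC Γ (.F φ) (.ret v) s → ∃ w, CSteps s (.ret w) ∧ RV Γ φ v w

/-- Applicative similarity on values: the union of all applicative simulations. -/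
def AppLeV (Γ : Cx) (φ : VTy0) (v w : Val Γ φ) : Prop :=
  ∃ RV RC, IsSim RV RC ∧ RV Γ φ v w

/-- Applicative similarity on computations. -/
def AppLeC (Γ : Cx) (κ : CTy0) (t s : Comp Γ κ) : Prop :=
  ∃ RV RC, IsSim RV RC ∧ RC Γ κ t s

/-- Shape clauses of the logical relation, value sort. -/
def shapeV (LV : VRel) (LC : CRel) : ∀ (Γ : Cx) (φ : VTy0), Val Γ φ → Val Γ φ → Prop
  | _, _, .var _, _ => True
  | _, _, .star, s => s = .star
  | Γ, _, .inl (φ₁ := φ₁) v, s => ∃ w, s = .inl w ∧ LV Γ φ₁ v w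
  | Γ, _, .inr (φ₂ := φ₂) v, s => ∃ w, s = .inr w ∧ LV Γ φ₂ v w
  | Γ, _, .pair (φ₁ := φ₁) (φ₂ := φ₂) v₁ v₂, s =>
      ∃ w₁ w₂, s = .pair w₁ w₂ ∧ LV Γ φ₁ v₁ w₁ ∧ LV Γ φ₂ v₂ w₂
  | Γ, _, .thunk (κ := κ) t, s => ∃ s', s = .thunk s' ∧ LC Γ κ t s'

/-- Shape clauses of the logical relation, computation sort. -/
def shapeC (LV : VRel) (LC : CRel) : ∀ (Γ : Cx) (κ : CTy0), Comp Γ κ → Comp Γ κ → Prop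
  | Γ, _, .ret (φ := φ) v, s => ∃ w, CSteps s (.ret w) ∧ LV Γ φ v w
  | Γ, _, .pair (κ₁ := κ₁) (κ₂ := κ₂) t₁ t₂, s =>
      ∃ s₁ s₂, CSteps s (.pair s₁ s₂) ∧ LC Γ κ₁ t₁ s₁ ∧ LC Γ κ₂ t₂ s₂
  | Γ, _, .fold (κ := κ) t, s => ∃ s', CSteps s (.fold s') ∧ LC Γ (substMu κ) t s'
  | Γ, _, .lam (φ := φ) (κ := κ) M, s =>
      ∃ N, CSteps s (.lam N) ∧
        ∀ (v w : Val Γ φ), LV Γ φ v w → LC Γ κ (subst1 M v) (subst1 N w)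
  | _, _, .force _, _ => True
  | _, _, .app _ _, _ => True
  | _, _, .unfold _, _ => True
  | _, _, .choice _ _, _ => True
  | _, _, .seq _ _, _ => True
  | _, _, .case _ _ _, _ => True
  | _, _, .fst _, _ => True
  | _, _, .snd _, _ => True
  | _, _, .pm _ _, _ => True

/-- The one-step operator on sorted relations defining the logical relation, value sort. -/
def PhiV (LV : VRel) (LC : CRel) : VRel := fun Γ φ t s =>
  (∀ (Δ : Cx) (σ σ' : Sub Γ Δ), (∀ ψ (x : Var Γ ψ), LV Δ ψ (σ ψ x) (σ' ψ x)) →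
      LV Δ φ (CBPV.substV σ t) (CBPV.substV σ' s)) ∧
  shapeV LV LC Γ φ t s

/-- The one-step operator on sorted relations defining the logical relation, computation sort. -/
def PhiC (LV : VRel) (LC : CRel) : CRel := fun Γ κ t s =>
  (∀ (Δ : Cx) (σ σ' : Sub Γ Δ), (∀ ψ (x : Var Γ ψ), LV Δ ψ (σ ψ x) (σ' ψ x)) →
      LC Δ κ (CBPV.substC σ t) (CBPV.substC σ' s)) ∧
  (∀ t', CStep t t' → ∃ s', CSteps s s' ∧ LC Γ κ t' s') ∧
  shapeC LV LC Γ κ t s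

/-- The ordinal-indexed approximations `L^α` of the logical relation. -/
noncomputable def LOrd (α : Ordinal.{0}) : VRel × CRel :=
  Ordinal.limitRecOn α
    (fun _ _ _ _ => True, fun _ _ _ _ => True)
    (fun _ ih => (PhiV ih.1 ih.2, PhiC ih.1 ih.2))
    (fun α _ ih =>
      (fun Γ φ v w => ∀ β (h : β < α), (ih β h).1 Γ φ v w,
       fun Γ κ t s => ∀ β (h : β < α), (ih β h).2 Γ κ t s))

/-- The step-indexed logical relation `L = ⋂_α L^α`, value sort. -/
def LRelV (Γ : Cx) (φ : VTy0) (v w : Val Γ φ) : Prop := ∀ α : Ordinal.{0}, (LOrd α).1 Γ φ v w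

/-- The step-indexed logical relation `L = ⋂_α L^α`, computation sort. -/
def LRelC (Γ : Cx) (κ : CTy0) (t s : Comp Γ κ) : Prop := ∀ α : Ordinal.{0}, (LOrd α).2 Γ κ t s
end CBPV

/-!
Let `≤η` (`EtaV`, `EtaC`) be the least compatible relation with `v ≤η thunk (force w)` whenever
`v ≤η w`. It is a congruence relating `v` to `thunk (force v)`, so it suffices that `t ≤η s` and
`t⇓` imply `s⇓`. Being closed under substitution, `≤η` is a strict simulation: each step of `t` is
matched by at least one step of `s`, the extra steps being the `force (thunk (force w)) → force w`
redexes created by expansion. A stuck `t` is matched by a term that becomes stuck once the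
expansions around forced variables are peeled off.
-/

namespace CBPV

open Relation

mutual
inductive EtaV : ∀ (Γ : Cx) (φ : VTy0), Val Γ φ → Val Γ φ → Prop
  | var {Γ φ} (x : Var Γ φ) : EtaV Γ φ (.var x) (.var x)
  | star {Γ} : EtaV Γ .unit .star .star
  | inl {Γ φ₁ φ₂} {v w : Val Γ φ₁} : EtaV Γ φ₁ v w → EtaV Γ (.sum φ₁ φ₂) (.inl v) (.inl w)
  | inr {Γ φ₁ φ₂} {v w : Val Γ φ₂} : EtaV Γ φ₂ v w → EtaV Γ (.sum φ₁ φ₂) (.inr v) (.inr w)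
  | pair {Γ φ₁ φ₂} {v₁ w₁ : Val Γ φ₁} {v₂ w₂ : Val Γ φ₂} :
      EtaV Γ φ₁ v₁ w₁ → EtaV Γ φ₂ v₂ w₂ →
      EtaV Γ (.prod φ₁ φ₂) (.pair v₁ v₂) (.pair w₁ w₂)
  | thunk {Γ κ} {t s : Comp Γ κ} : EtaC Γ κ t s → EtaV Γ (.U κ) (.thunk t) (.thunk s)
  | eta {Γ κ} {v w : Val Γ (.U κ)} : EtaV Γ (.U κ) v w →
      EtaV Γ (.U κ) v (.thunk (.force w))
inductive EtaC : ∀ (Γ : Cx) (κ : CTy0), Comp Γ κ → Comp Γ κ → Prop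
  | ret {Γ φ} {v w : Val Γ φ} : EtaV Γ φ v w → EtaC Γ (.F φ) (.ret v) (.ret w)
  | force {Γ κ} {v w : Val Γ (.U κ)} : EtaV Γ (.U κ) v w → EtaC Γ κ (.force v) (.force w)
  | app {Γ φ κ} {t s : Comp Γ (.arr φ κ)} {v w : Val Γ φ} :
      EtaC Γ (.arr φ κ) t s → EtaV Γ φ v w → EtaC Γ κ (.app t v) (.app s w)
  | lam {Γ φ κ} {M N : Comp (φ :: Γ) κ} :
      EtaC (φ :: Γ) κ M N → EtaC Γ (.arr φ κ) (.lam M) (.lam N)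
  | fold {Γ} {κ : CTy 1} {t s : Comp Γ (substMu κ)} :
      EtaC Γ (substMu κ) t s → EtaC Γ (.mu κ) (.fold t) (.fold s)
  | unfold {Γ} {κ : CTy 1} {t s : Comp Γ (.mu κ)} :
      EtaC Γ (.mu κ) t s → EtaC Γ (substMu κ) (.unfold t) (.unfold s)
  | choice {Γ κ} {t s t' s' : Comp Γ κ} :
      EtaC Γ κ t s → EtaC Γ κ t' s' → EtaC Γ κ (.choice t t') (.choice s s')
  | seq {Γ φ κ} {s s' : Comp Γ (.F φ)} {t t' : Comp (φ :: Γ) κ} :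
      EtaC Γ (.F φ) s s' → EtaC (φ :: Γ) κ t t' → EtaC Γ κ (.seq s t) (.seq s' t')
  | case {Γ φ₁ φ₂ κ} {v w : Val Γ (.sum φ₁ φ₂)}
      {s s' : Comp (φ₁ :: Γ) κ} {r r' : Comp (φ₂ :: Γ) κ} :
      EtaV Γ (.sum φ₁ φ₂) v w → EtaC (φ₁ :: Γ) κ s s' → EtaC (φ₂ :: Γ) κ r r' →
      EtaC Γ κ (.case v s r) (.case w s' r')
  | fst {Γ κ₁ κ₂} {t s : Comp Γ (.tensor κ₁ κ₂)} :
      EtaC Γ (.tensor κ₁ κ₂) t s → EtaC Γ κ₁ (.fst t) (.fst s)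
  | snd {Γ κ₁ κ₂} {t s : Comp Γ (.tensor κ₁ κ₂)} :
      EtaC Γ (.tensor κ₁ κ₂) t s → EtaC Γ κ₂ (.snd t) (.snd s)
  | pair {Γ κ₁ κ₂} {t₁ s₁ : Comp Γ κ₁} {t₂ s₂ : Comp Γ κ₂} :
      EtaC Γ κ₁ t₁ s₁ → EtaC Γ κ₂ t₂ s₂ →
      EtaC Γ (.tensor κ₁ κ₂) (.pair t₁ t₂) (.pair s₁ s₂)
  | pm {Γ φ₁ φ₂ κ} {v w : Val Γ (.prod φ₁ φ₂)} {t s : Comp (φ₁ :: φ₂ :: Γ) κ} :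
      EtaV Γ (.prod φ₁ φ₂) v w → EtaC (φ₁ :: φ₂ :: Γ) κ t s →
      EtaC Γ κ (.pm v t) (.pm w s)
end

mutual
theorem EtaV.refl : ∀ {Γ : Cx} {φ : VTy0} (v : Val Γ φ), EtaV Γ φ v v
  | _, _, .var x => .var x
  | _, _, .star => .star
  | _, _, .inl v => .inl (EtaV.refl v)
  | _, _, .inr v => .inr (EtaV.refl v)
  | _, _, .pair v w => .pair (EtaV.refl v) (EtaV.refl w)
  | _, _, .thunk t => .thunk (EtaC.refl t)
theorem EtaC.refl : ∀ {Γ : Cx} {κ : CTy0} (t : Comp Γ κ), EtaC Γ κ t t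
  | _, _, .ret v => .ret (EtaV.refl v)
  | _, _, .force v => .force (EtaV.refl v)
  | _, _, .app t v => .app (EtaC.refl t) (EtaV.refl v)
  | _, _, .lam t => .lam (EtaC.refl t)
  | _, _, .fold t => .fold (EtaC.refl t)
  | _, _, .unfold t => .unfold (EtaC.refl t)
  | _, _, .choice t s => .choice (EtaC.refl t) (EtaC.refl s)
  | _, _, .seq s t => .seq (EtaC.refl s) (EtaC.refl t)
  | _, _, .case v s r => .case (EtaV.refl v) (EtaC.refl s) (EtaC.refl r)
  | _, _, .fst t => .fst (EtaC.refl t)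
  | _, _, .snd t => .snd (EtaC.refl t)
  | _, _, .pair t s => .pair (EtaC.refl t) (EtaC.refl s)
  | _, _, .pm v t => .pm (EtaV.refl v) (EtaC.refl t)
end

mutual
theorem EtaV.rename {Γ Δ : Cx} (r : Ren Γ Δ) {φ : VTy0} {v w : Val Γ φ} :
    EtaV Γ φ v w → EtaV Δ φ (renameV r v) (renameV r w)
  | .var x => .var _
  | .star => .star
  | .inl h => .inl (h.rename r)
  | .inr h => .inr (h.rename r)
  | .pair h₁ h₂ => .pair (h₁.rename r) (h₂.rename r)
  | .thunk h => .thunk (h.rename r)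
  | .eta h => .eta (h.rename r)
theorem EtaC.rename {Γ Δ : Cx} (r : Ren Γ Δ) {κ : CTy0} {t s : Comp Γ κ} :
    EtaC Γ κ t s → EtaC Δ κ (renameC r t) (renameC r s)
  | .ret h => .ret (h.rename r)
  | .force h => .force (h.rename r)
  | .app h hv => .app (h.rename r) (hv.rename r)
  | .lam h => .lam (h.rename r.lift)
  | .fold h => .fold (h.rename r)
  | .unfold h => .unfold (h.rename r)
  | .choice h₁ h₂ => .choice (h₁.rename r) (h₂.rename r)
  | .seq h₁ h₂ => .seq (h₁.rename r) (h₂.rename r.lift)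
  | .case hv h₁ h₂ => .case (hv.rename r) (h₁.rename r.lift) (h₂.rename r.lift)
  | .fst h => .fst (h.rename r)
  | .snd h => .snd (h.rename r)
  | .pair h₁ h₂ => .pair (h₁.rename r) (h₂.rename r)
  | .pm hv h => .pm (hv.rename r) (h.rename r.lift.lift)
end

def EtaSub {Γ Δ : Cx} (σ σ' : Sub Γ Δ) : Prop := ∀ ψ x, EtaV Δ ψ (σ ψ x) (σ' ψ x)

theorem EtaSub.lift {Γ Δ : Cx} {σ σ' : Sub Γ Δ} (hσ : EtaSub σ σ') (φ : VTy0) :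
    EtaSub (σ.lift (φ := φ)) σ'.lift
  | _, .vz => .var _
  | ψ, .vs y => (hσ ψ y).rename _

theorem EtaSub.sub1 {Γ : Cx} {φ : VTy0} {v w : Val Γ φ} (h : EtaV Γ φ v w) :
    EtaSub (sub1 v) (sub1 w)
  | _, .vz => h
  | _, .vs y => .var y

mutual
theorem EtaV.subst {Γ Δ : Cx} {σ σ' : Sub Γ Δ} (hσ : EtaSub σ σ') {φ : VTy0} {v w : Val Γ φ} :
    EtaV Γ φ v w → EtaV Δ φ (substV σ v) (substV σ' w)
  | .var x => hσ _ x
  | .star => .star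
  | .inl h => .inl (h.subst hσ)
  | .inr h => .inr (h.subst hσ)
  | .pair h₁ h₂ => .pair (h₁.subst hσ) (h₂.subst hσ)
  | .thunk h => .thunk (h.subst hσ)
  | .eta h => .eta (h.subst hσ)
theorem EtaC.subst {Γ Δ : Cx} {σ σ' : Sub Γ Δ} (hσ : EtaSub σ σ') {κ : CTy0} {t s : Comp Γ κ} :
    EtaC Γ κ t s → EtaC Δ κ (substC σ t) (substC σ' s)
  | .ret h => .ret (h.subst hσ)
  | .force h => .force (h.subst hσ)
  | .app h hv => .app (h.subst hσ) (hv.subst hσ)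
  | .lam h => .lam (h.subst (hσ.lift _))
  | .fold h => .fold (h.subst hσ)
  | .unfold h => .unfold (h.subst hσ)
  | .choice h₁ h₂ => .choice (h₁.subst hσ) (h₂.subst hσ)
  | .seq h₁ h₂ => .seq (h₁.subst hσ) (h₂.subst (hσ.lift _))
  | .case hv h₁ h₂ => .case (hv.subst hσ) (h₁.subst (hσ.lift _)) (h₂.subst (hσ.lift _))
  | .fst h => .fst (h.subst hσ)
  | .snd h => .snd (h.subst hσ)
  | .pair h₁ h₂ => .pair (h₁.subst hσ) (h₂.subst hσ)
  | .pm hv h => .pm (hv.subst hσ) (h.subst ((hσ.lift _).lift _))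
end

theorem EtaC.subst1 {Γ : Cx} {φ : VTy0} {κ : CTy0} {M N : Comp (φ :: Γ) κ} {v w : Val Γ φ}
    (hMN : EtaC (φ :: Γ) κ M N) (hvw : EtaV Γ φ v w) : EtaC Γ κ (subst1 M v) (subst1 N w) :=
  hMN.subst (EtaSub.sub1 hvw)

/-- Inversion of `EtaC` at left-hand computations whose type is not a type variable. `cases`
cannot invert there: it would have to unify that type with the type `substMu κ` of the `unfold`
rule, which is not a constructor application. -/
def EtaC.LeftInv : ∀ (Γ : Cx) (κ : CTy0), Comp Γ κ → Comp Γ κ → Prop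
  | Γ, _, .ret (φ := φ) v, s => ∃ w, s = .ret w ∧ EtaV Γ φ v w
  | Γ, _, .lam (φ := φ) (κ := κ) M, s => ∃ N, s = .lam N ∧ EtaC (φ :: Γ) κ M N
  | Γ, _, .pair (κ₁ := κ₁) (κ₂ := κ₂) t₁ t₂, s =>
      ∃ s₁ s₂, s = .pair s₁ s₂ ∧ EtaC Γ κ₁ t₁ s₁ ∧ EtaC Γ κ₂ t₂ s₂
  | Γ, _, .fold (κ := κ) t, s => ∃ s', s = .fold s' ∧ EtaC Γ (substMu κ) t s'
  | Γ, _, .unfold (κ := κ) t, s => ∃ s', s = .unfold s' ∧ EtaC Γ (.mu κ) t s'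
  | _, _, _, _ => True

def EtaC.RightInv : ∀ (Γ : Cx) (κ : CTy0), Comp Γ κ → Comp Γ κ → Prop
  | _, _, t, .lam _ => ∃ M, t = .lam M
  | _, _, t, .pair _ _ => ∃ t₁ t₂, t = .pair t₁ t₂
  | _, _, t, .unfold _ => ∃ t', t = .unfold t'
  | _, _, _, _ => True

theorem EtaC.leftInv {Γ : Cx} {κ : CTy0} {t s : Comp Γ κ} (h : EtaC Γ κ t s) :
    EtaC.LeftInv Γ κ t s := by
  cases h <;> simp only [LeftInv] <;>
    first
    | exact ⟨_, rfl, by assumption⟩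
    | exact ⟨_, _, rfl, by assumption, by assumption⟩

theorem EtaC.rightInv {Γ : Cx} {κ : CTy0} {t s : Comp Γ κ} (h : EtaC Γ κ t s) :
    EtaC.RightInv Γ κ t s := by
  cases h <;> simp only [RightInv] <;> first | exact ⟨_, rfl⟩ | exact ⟨_, _, rfl⟩

theorem EtaV.simulate_force_thunk {Γ : Cx} {κ : CTy0} {t : Comp Γ κ} {w : Val Γ (.U κ)} :
    EtaV Γ (.U κ) (.thunk t) w → ∃ s, TransGen CStep (.force w) s ∧ EtaC Γ κ t s
  | .thunk h => ⟨_, .single (.force_thunk _), h⟩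
  | .eta h =>
    have ⟨s, hs, hts⟩ := h.simulate_force_thunk
    ⟨s, .head (.force_thunk _) hs, hts⟩

theorem EtaV.force_steps_of_var {Γ : Cx} {κ : CTy0} {x : Var Γ (.U κ)} {w : Val Γ (.U κ)} :
    EtaV Γ (.U κ) (.var x) w → CSteps (.force w) (.force (.var x))
  | .var _ => .refl
  | .eta h => .head (.force_thunk _) h.force_steps_of_var

theorem EtaC.simulate {Γ : Cx} {κ : CTy0} {t t' s : Comp Γ κ} (h : EtaC Γ κ t s)
    (hstep : CStep t t') : ∃ s', TransGen CStep s s' ∧ EtaC Γ κ t' s' := by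
  induction hstep with
  | fold_unfold =>
    obtain ⟨_, rfl, h₁⟩ := h.leftInv
    obtain ⟨_, rfl, h₂⟩ := h₁.leftInv
    exact ⟨_, .single (.fold_unfold _), h₂⟩
  | app_cong _ _ ih =>
    cases h with | app h₁ hv =>
    obtain ⟨_, hs, h'⟩ := ih h₁
    exact ⟨_, TransGen.lift (Comp.app · _) (fun _ _ => .app_cong _) _ _ hs, .app h' hv⟩
  | app_beta =>
    cases h with | app h₁ hv =>
    obtain ⟨_, rfl, hM⟩ := h₁.leftInv
    exact ⟨_, .single (.app_beta _ _), hM.subst1 hv⟩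
  | fst_cong _ ih =>
    cases h with | fst h₁ =>
    obtain ⟨_, hs, h'⟩ := ih h₁
    exact ⟨_, TransGen.lift Comp.fst (fun _ _ => .fst_cong) _ _ hs, .fst h'⟩
  | snd_cong _ ih =>
    cases h with | snd h₁ =>
    obtain ⟨_, hs, h'⟩ := ih h₁
    exact ⟨_, TransGen.lift Comp.snd (fun _ _ => .snd_cong) _ _ hs, .snd h'⟩
  | fst_pair =>
    cases h with | fst h₁ =>
    obtain ⟨_, _, rfl, h', -⟩ := h₁.leftInv
    exact ⟨_, .single (.fst_pair _ _), h'⟩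
  | snd_pair =>
    cases h with | snd h₁ =>
    obtain ⟨_, _, rfl, -, h'⟩ := h₁.leftInv
    exact ⟨_, .single (.snd_pair _ _), h'⟩
  | choice_l =>
    cases h with | choice h' _ =>
    exact ⟨_, .single (.choice_l _ _), h'⟩
  | choice_r =>
    cases h with | choice _ h' =>
    exact ⟨_, .single (.choice_r _ _), h'⟩
  | seq_cong _ _ ih =>
    cases h with | seq h₁ h₂ =>
    obtain ⟨_, hs, h'⟩ := ih h₁
    exact ⟨_, TransGen.lift (Comp.seq · _) (fun _ _ => .seq_cong _) _ _ hs, .seq h' h₂⟩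
  | seq_ret _ _ ih =>
    cases h with | seq h₁ h₂ =>
    obtain ⟨_, hs, hret⟩ := ih h₁
    obtain ⟨_, rfl, hv⟩ := hret.leftInv
    -- the reduction to `ret w` on the right is nonempty, so its last step yields a `seq_ret` step
    obtain ⟨_, hs, hlast⟩ := TransGen.tail'_iff.mp hs
    exact ⟨_, .tail' (ReflTransGen.lift (Comp.seq · _) (fun _ _ => .seq_cong _) _ _ hs)
      (.seq_ret _ hlast), .app (.lam h₂) hv⟩
  | case_inl =>
    cases h with | case hv h₁ _ =>
    cases hv with | inl hv =>
    exact ⟨_, .single (.case_inl _ _ _), .app (.lam h₁) hv⟩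
  | case_inr =>
    cases h with | case hv _ h₂ =>
    cases hv with | inr hv =>
    exact ⟨_, .single (.case_inr _ _ _), .app (.lam h₂) hv⟩
  | force_thunk =>
    cases h with | force hv =>
    exact hv.simulate_force_thunk
  | pm_pair =>
    cases h with | pm hv h₁ =>
    cases hv with | pair hv₁ hv₂ =>
    exact ⟨_, .single (.pm_pair _ _ _), .app (.lam (.app (.lam h₁) (hv₁.rename _))) hv₂⟩

def Stuck {Γ : Cx} {κ : CTy0} (t : Comp Γ κ) : Prop := ∀ u, ¬ CStep t u

theorem stuck_unfold {Γ : Cx} {κ : CTy 1} (t : Comp Γ (.mu κ)) : Stuck (.unfold t) := by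
  -- as for `EtaC.LeftInv`, steps out of `unfold t` can only be inverted at an arbitrary type
  suffices ∀ {κ'} {a b : Comp Γ κ'}, CStep a b → match a with | .unfold _ => False | _ => True
    from fun _ h => this h
  intro _ _ _ h
  cases h <;> trivial

theorem Stuck.seq {Γ : Cx} {φ : VTy0} {κ : CTy0} {s : Comp Γ (.F φ)} (hs : Stuck s)
    (t : Comp (φ :: Γ) κ) : Stuck (.seq s t) := by
  intro _ h
  cases h with
  | seq_cong _ h | seq_ret _ h => exact hs _ h

theorem Stuck.app {Γ : Cx} {φ : VTy0} {κ : CTy0} {t : Comp Γ (.arr φ κ)} (ht : Stuck t)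
    (hlam : ∀ M, t ≠ .lam M) (v : Val Γ φ) : Stuck (.app t v) := by
  intro _ h
  cases h with
  | app_cong _ h => exact ht _ h
  | app_beta => exact hlam _ rfl

theorem Stuck.fst {Γ : Cx} {κ₁ κ₂ : CTy0} {t : Comp Γ (.tensor κ₁ κ₂)} (ht : Stuck t)
    (hpair : ∀ t₁ t₂, t ≠ .pair t₁ t₂) : Stuck (.fst t) := by
  intro _ h
  cases h with
  | fst_cong h => exact ht _ h
  | fst_pair => exact hpair _ _ rfl

theorem Stuck.snd {Γ : Cx} {κ₁ κ₂ : CTy0} {t : Comp Γ (.tensor κ₁ κ₂)} (ht : Stuck t)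
    (hpair : ∀ t₁ t₂, t ≠ .pair t₁ t₂) : Stuck (.snd t) := by
  intro _ h
  cases h with
  | snd_cong h => exact ht _ h
  | snd_pair => exact hpair _ _ rfl

theorem EtaC.exists_stuck : ∀ {Γ : Cx} {κ : CTy0} {t s : Comp Γ κ}, EtaC Γ κ t s → Stuck t →
    ∃ s', CSteps s s' ∧ Stuck s' ∧ EtaC Γ κ t s'
  | _, _, _, _, h@(.ret _), _ => ⟨_, .refl, by rintro _ ⟨⟩, h⟩
  | _, _, _, _, h@(.lam _), _ => ⟨_, .refl, by rintro _ ⟨⟩, h⟩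
  | _, _, _, _, h@(.pair _ _), _ => ⟨_, .refl, by rintro _ ⟨⟩, h⟩
  | _, _, _, _, h@(.unfold _), _ => ⟨_, .refl, stuck_unfold _, h⟩
  | _, _, _, _, .choice _ _, ht => (ht _ (.choice_l _ _)).elim
  | _, _, _, _, .force (v := .thunk _) _, ht => (ht _ (.force_thunk _)).elim
  | _, _, _, _, .force (v := .var _) hv, _ =>
    ⟨_, hv.force_steps_of_var, by rintro _ ⟨⟩, EtaC.refl _⟩
  | _, _, _, _, .case (v := .inl _) _ _ _, ht => (ht _ (.case_inl _ _ _)).elim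
  | _, _, _, _, .case (v := .inr _) _ _ _, ht => (ht _ (.case_inr _ _ _)).elim
  | _, _, _, _, h@(.case (v := .var _) (.var _) _ _), _ => ⟨_, .refl, by rintro _ ⟨⟩, h⟩
  | _, _, _, _, .pm (v := .pair _ _) _ _, ht => (ht _ (.pm_pair _ _ _)).elim
  | _, _, _, _, h@(.pm (v := .var _) (.var _) _), _ => ⟨_, .refl, by rintro _ ⟨⟩, h⟩
  | _, _, _, _, h@(.fold h₁), ht => by
    refine ⟨_, .refl, ?_, h⟩
    rintro _ ⟨⟩
    obtain ⟨_, rfl⟩ := h₁.rightInv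
    exact ht _ (.fold_unfold _)
  | _, _, _, _, .seq h₁ h₂, ht => by
    obtain ⟨_, hs, hn, h'⟩ := h₁.exists_stuck fun _ hu => ht _ (.seq_cong _ hu)
    exact ⟨_, ReflTransGen.lift (Comp.seq · _) (fun _ _ => .seq_cong _) _ _ hs, hn.seq _,
      .seq h' h₂⟩
  | _, _, _, _, .app h₁ hv, ht => by
    obtain ⟨_, hs, hn, h'⟩ := h₁.exists_stuck fun _ hu => ht _ (.app_cong _ hu)
    refine ⟨_, ReflTransGen.lift (Comp.app · _) (fun _ _ => .app_cong _) _ _ hs, hn.app ?_ _,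
      .app h' hv⟩
    rintro _ rfl
    obtain ⟨_, rfl⟩ := h'.rightInv
    exact ht _ (.app_beta _ _)
  | _, _, _, _, .fst h₁, ht => by
    obtain ⟨_, hs, hn, h'⟩ := h₁.exists_stuck fun _ hu => ht _ (.fst_cong hu)
    refine ⟨_, ReflTransGen.lift Comp.fst (fun _ _ => .fst_cong) _ _ hs, hn.fst ?_, .fst h'⟩
    rintro _ _ rfl
    obtain ⟨_, _, rfl⟩ := h'.rightInv
    exact ht _ (.fst_pair _ _)
  | _, _, _, _, .snd h₁, ht => by
    obtain ⟨_, hs, hn, h'⟩ := h₁.exists_stuck fun _ hu => ht _ (.snd_cong hu)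
    refine ⟨_, ReflTransGen.lift Comp.snd (fun _ _ => .snd_cong) _ _ hs, hn.snd ?_, .snd h'⟩
    rintro _ _ rfl
    obtain ⟨_, _, rfl⟩ := h'.rightInv
    exact ht _ (.snd_pair _ _)

theorem EtaC.conv {Γ : Cx} {κ : CTy0} {t s : Comp Γ κ} (h : EtaC Γ κ t s) (ht : Conv t) :
    Conv s := by
  obtain ⟨n, hsteps, hn⟩ := ht
  induction hsteps using ReflTransGen.head_induction_on generalizing s with
  | refl =>
    obtain ⟨s', hs, hs', -⟩ := h.exists_stuck hn
    exact ⟨s', hs, hs'⟩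
  | head hstep _ ih =>
    obtain ⟨s₁, hs₁, h₁⟩ := h.simulate hstep
    obtain ⟨s', hs, hs'⟩ := ih h₁
    exact ⟨s', hs₁.to_reflTransGen.trans hs, hs'⟩

theorem isCong_eta : IsCong EtaV EtaC where
  rencompat := ⟨fun _ _ r _ _ _ h => h.rename r, fun _ _ r _ _ _ h => h.rename r⟩
  var _ _ := .var
  star _ := .star
  inl _ _ _ _ _ := .inl
  inr _ _ _ _ _ := .inr
  pairV _ _ _ _ _ _ _ := .pair
  thunk _ _ _ _ := .thunk
  ret _ _ _ _ := .ret
  force _ _ _ _ := .force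
  app _ _ _ _ _ _ _ := .app
  lam _ _ _ _ _ := .lam
  fold _ _ _ _ := .fold
  unfold _ _ _ _ := .unfold
  choice _ _ _ _ _ _ := .choice
  seq _ _ _ _ _ _ _ := .seq
  case _ _ _ _ _ _ _ _ _ _ := .case
  fst _ _ _ _ _ := .fst
  snd _ _ _ _ _ := .snd
  pairC _ _ _ _ _ _ _ := .pair
  pm _ _ _ _ _ _ _ _ := .pm

theorem ctxLeV_thunk_force {Γ : Cx} {κ : CTy0} (v : Val Γ (.U κ)) :
    CtxLeV Γ (.U κ) v (.thunk (.force v)) :=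
  ⟨EtaV, EtaC, isCong_eta, fun _ _ _ _ h => h.conv, .eta (.refl v)⟩

end CBPV

open CBPV in
/-- η-law for CBPV thunks (one half): for closed values of thunk type. -/
theorem cbpv_eta_thunk :
    ∀ (κ : CTy0) (v : Val [] (.U κ)),
      CtxLeV [] (.U κ) v (.thunk (.force v)) :=
  fun _ => ctxLeV_thunk_force
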